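/- arXiv:2007.02113 — 3 statements merged into one kernel-verified Lean document; each statement's English description precedes it below -/
import Mathlib

section
/- For every H ∈ (0, 1/2) and T > 0, there exist, for each n ≥ 1, positive weights (α_i^n)_{1≤i≤n} and positive mean-reversion speeds (x_i^n)_{1≤i≤n} such that the exponential kernels K^n(τ) = ∑_{i=1}^n α_i^n e^{-x_i^n τ} converge to the power-law kernel K(τ) = τ^{H-1/2} in L²([0,T]): ‖K^n − K‖_{L²([0,T])} → 0 as n → ∞. -/
open MeasureTheory Real Filter

/-!
With `s = 1/2 - H ∈ (0, 1/2)`, the power kernel is a Laplace transform: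
`Γ(s) τ^{-s} = ∫₀^∞ x^{s-1} e^{-τx} dx`. Discretising this integral by a right Riemann sum with
mesh `Δₙ = 1/√(n+1)` on the nodes `xᵢ = iΔₙ`, `1 ≤ i ≤ n`, gives an exponential kernel with
positive weights `xᵢ^{s-1} Δₙ / Γ(s)`. The integrand is decreasing in `x`, so the Riemann sum
lies between the integral over `(Δₙ, (n+1)Δₙ]` and the full integral; since `Δₙ → 0` and
`(n+1)Δₙ = √(n+1) → ∞`, it converges pointwise from below to `τ^{-s}`. As `τ^{-2s}` is integrable
on `(0, T]` (this is where `H > 0` enters), dominated convergence gives the `L²` convergence.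
-/

noncomputable def rightRiemannSum (f : ℝ → ℝ) (Δ : ℝ) (n : ℕ) : ℝ :=
  ∑ i ∈ Finset.Icc 1 n, Δ * f (i * Δ)

lemma rightRiemannSum_eq_sum_range (f : ℝ → ℝ) (Δ : ℝ) (n : ℕ) :
    rightRiemannSum f Δ n = ∑ k ∈ Finset.range n, Δ * f (k * Δ + Δ) := by
  have h := Finset.sum_Ico_add' (fun i : ℕ => Δ * f (i * Δ)) 0 n 1
  rw [zero_add, Finset.Ico_add_one_right_eq_Icc, ← Finset.range_eq_Ico] at h
  rw [rightRiemannSum, ← h]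
  push_cast
  simp only [add_mul, one_mul]

namespace AntitoneOn

variable {f : ℝ → ℝ} {a Δ : ℝ}

lemma mul_le_intervalIntegral (hf : AntitoneOn f (Set.Ioi 0))
    (hfi : IntervalIntegrable f volume a (a + Δ)) (ha : 0 ≤ a) (hΔ : 0 ≤ Δ) :
    Δ * f (a + Δ) ≤ ∫ x in a..a + Δ, f x := by
  calc Δ * f (a + Δ) = ∫ _ in a..a + Δ, f (a + Δ) := by simp
    _ ≤ ∫ x in a..a + Δ, f x :=
      intervalIntegral.integral_mono_on_of_le_Ioo (by linarith) intervalIntegrable_const hfi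
        fun x hx => hf (ha.trans_lt hx.1) (by simp only [Set.mem_Ioi]; linarith [hx.1, hx.2])
          hx.2.le

lemma intervalIntegral_le_mul (hf : AntitoneOn f (Set.Ioi 0)) (ha : 0 < a) (hΔ : 0 ≤ Δ) :
    ∫ x in a..a + Δ, f x ≤ Δ * f a := by
  have hsub : Set.uIcc a (a + Δ) ⊆ Set.Ioi 0 := by
    rw [Set.uIcc_of_le (by linarith)]
    exact fun x hx => ha.trans_le hx.1
  calc ∫ x in a..a + Δ, f x ≤ ∫ _ in a..a + Δ, f a :=
      intervalIntegral.integral_mono_on (by linarith) ((hf.mono hsub).intervalIntegrable)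
        intervalIntegrable_const fun x hx => hf ha (ha.trans_le hx.1) hx.1
    _ = Δ * f a := by simp

lemma rightRiemannSum_le_integral_Ioi (hf : AntitoneOn f (Set.Ioi 0))
    (hf0 : ∀ x ∈ Set.Ioi 0, 0 ≤ f x) (hfi : IntegrableOn f (Set.Ioi 0)) (hΔ : 0 ≤ Δ) (n : ℕ) :
    rightRiemannSum f Δ n ≤ ∫ x in Set.Ioi 0, f x := by
  have hcell (k : ℕ) : IntervalIntegrable f volume (k * Δ) (k * Δ + Δ) :=
    (intervalIntegrable_iff_integrableOn_Ioc_of_le (by linarith)).2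
      (hfi.mono_set fun x hx => (by positivity : (0 : ℝ) ≤ k * Δ).trans_lt hx.1)
  have hnext (k : ℕ) : ((k + 1 : ℕ) : ℝ) * Δ = k * Δ + Δ := by push_cast; ring
  calc rightRiemannSum f Δ n = ∑ k ∈ Finset.range n, Δ * f (k * Δ + Δ) :=
        rightRiemannSum_eq_sum_range f Δ n
    _ ≤ ∑ k ∈ Finset.range n, ∫ x in k * Δ..k * Δ + Δ, f x := by
        gcongr with k
        exact hf.mul_le_intervalIntegral (hcell k) (by positivity) hΔ
    _ = ∫ x in (0 : ℕ) * Δ..n * Δ, f x := by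
        simp only [← hnext]
        exact intervalIntegral.sum_integral_adjacent_intervals fun k _ => hnext k ▸ hcell k
    _ ≤ ∫ x in Set.Ioi 0, f x := by
        rw [Nat.cast_zero, zero_mul, intervalIntegral.integral_of_le (by positivity)]
        exact setIntegral_mono_set hfi ((ae_restrict_mem measurableSet_Ioi).mono hf0)
          Set.Ioc_subset_Ioi_self.eventuallyLE

lemma integral_Ioc_le_rightRiemannSum (hf : AntitoneOn f (Set.Ioi 0)) (hΔ : 0 < Δ) (n : ℕ) :
    ∫ x in Set.Ioc Δ ((n + 1) * Δ), f x ≤ rightRiemannSum f Δ n := by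
  have hnext (k : ℕ) : ((k + 1 : ℕ) : ℝ) * Δ + Δ = (k * Δ + Δ) + Δ := by push_cast; ring
  have hsub (k : ℕ) : Set.uIcc (k * Δ + Δ) ((k * Δ + Δ) + Δ) ⊆ Set.Ioi 0 := by
    rw [Set.uIcc_of_le (by linarith)]
    exact fun x hx => (by positivity : (0 : ℝ) < k * Δ + Δ).trans_le hx.1
  calc ∫ x in Set.Ioc Δ ((n + 1) * Δ), f x = ∫ x in (0 : ℕ) * Δ + Δ..n * Δ + Δ, f x := by
        rw [Nat.cast_zero, zero_mul, zero_add, ← add_one_mul,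
          intervalIntegral.integral_of_le (le_mul_of_one_le_left hΔ.le (by simp))]
    _ = ∑ k ∈ Finset.range n, ∫ x in k * Δ + Δ..(k * Δ + Δ) + Δ, f x := by
        simp only [← hnext]
        exact (intervalIntegral.sum_integral_adjacent_intervals (a := fun k : ℕ => k * Δ + Δ)
          fun k _ => hnext k ▸ (hf.mono (hsub k)).intervalIntegrable).symm
    _ ≤ ∑ k ∈ Finset.range n, Δ * f (k * Δ + Δ) := by
        gcongr with k
        exact hf.intervalIntegral_le_mul (by positivity) hΔ.le
    _ = rightRiemannSum f Δ n := (rightRiemannSum_eq_sum_range f Δ n).symm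

lemma tendsto_rightRiemannSum (hf : AntitoneOn f (Set.Ioi 0)) (hf0 : ∀ x ∈ Set.Ioi 0, 0 ≤ f x)
    (hfi : IntegrableOn f (Set.Ioi 0)) {Δ : ℕ → ℝ} (hΔpos : ∀ n, 0 < Δ n)
    (hΔ : Tendsto Δ atTop (nhds 0)) (hnΔ : Tendsto (fun n : ℕ => (n + 1) * Δ n) atTop atTop) :
    Tendsto (fun n => rightRiemannSum f (Δ n) n) atTop (nhds (∫ x in Set.Ioi 0, f x)) := by
  have hcover : AECover (volume.restrict (Set.Ioi 0)) atTop
      fun n : ℕ => Set.Ioc (Δ n) ((n + 1) * Δ n) :=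
    (aecover_Ioi_of_Ioi hΔ).inter (aecover_Iic hnΔ)
  have hlower : Tendsto (fun n : ℕ => ∫ x in Set.Ioc (Δ n) ((n + 1) * Δ n), f x) atTop
      (nhds (∫ x in Set.Ioi 0, f x)) := by
    refine (hcover.integral_tendsto_of_countably_generated hfi).congr fun n => ?_
    rw [Measure.restrict_restrict measurableSet_Ioc, Set.inter_eq_left.2]
    exact fun x hx => (hΔpos n).trans hx.1
  exact tendsto_of_tendsto_of_tendsto_of_le_of_le hlower tendsto_const_nhds
    (fun n => hf.integral_Ioc_le_rightRiemannSum (hΔpos n) n)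
    (fun n => hf.rightRiemannSum_le_integral_Ioi hf0 hfi (hΔpos n).le n)

end AntitoneOn

section GammaKernel

variable {s τ : ℝ}

lemma antitoneOn_rpow_mul_exp_neg_mul (hs : s ≤ 1) (hτ : 0 ≤ τ) :
    AntitoneOn (fun x => x ^ (s - 1) * exp (-(τ * x))) (Set.Ioi 0) := fun _ hx y _ hxy =>
  mul_le_mul (rpow_le_rpow_of_nonpos hx hxy (by linarith))
    (exp_le_exp.2 (by nlinarith)) (exp_pos _).le (rpow_nonneg hx.le _)

lemma rpow_mul_exp_neg_mul_nonneg : ∀ x ∈ Set.Ioi (0 : ℝ), 0 ≤ x ^ (s - 1) * exp (-(τ * x)) :=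
  fun _ hx => mul_nonneg (rpow_nonneg hx.le _) (exp_pos _).le

lemma rpow_neg_eq_integral_div_Gamma (hs : 0 < s) (hτ : 0 < τ) :
    τ ^ (-s) = (∫ x in Set.Ioi 0, x ^ (s - 1) * exp (-(τ * x))) / Gamma s := by
  rw [integral_rpow_mul_exp_neg_mul_Ioi hs hτ, mul_div_cancel_right₀ _ (Gamma_pos_of_pos hs).ne',
    one_div, inv_rpow hτ.le, rpow_neg hτ.le]

lemma integrableOn_rpow_mul_exp_neg_mul (hs : 0 < s) (hτ : 0 < τ) :
    IntegrableOn (fun x => x ^ (s - 1) * exp (-(τ * x))) (Set.Ioi 0) :=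
  .of_integral_ne_zero (by rw [integral_rpow_mul_exp_neg_mul_Ioi hs hτ]; positivity)

lemma integrableOn_rpow_neg_sq_Ioc (hs : s < 1 / 2) (T : ℝ) :
    IntegrableOn (fun τ : ℝ => (τ ^ (-s)) ^ 2) (Set.Ioc 0 T) := by
  refine (intervalIntegral.intervalIntegrable_rpow' (r := -(2 * s)) (by linarith)).1.congr_fun
    (fun τ hτ => ?_) measurableSet_Ioc
  rw [← rpow_mul_natCast hτ.1.le]
  ring_nf

noncomputable def expKernelApprox (s Δ : ℝ) (n : ℕ) (τ : ℝ) : ℝ :=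
  ∑ i ∈ Finset.Icc 1 n, (i * Δ) ^ (s - 1) * Δ / Gamma s * exp (-(i * Δ) * τ)

lemma expKernelApprox_eq (s Δ : ℝ) (n : ℕ) (τ : ℝ) :
    expKernelApprox s Δ n τ =
      rightRiemannSum (fun x => x ^ (s - 1) * exp (-(τ * x))) Δ n / Gamma s := by
  rw [expKernelApprox, rightRiemannSum, Finset.sum_div]
  refine Finset.sum_congr rfl fun i _ => ?_
  rw [neg_mul, mul_comm _ τ]
  ring

lemma continuous_expKernelApprox (s Δ : ℝ) (n : ℕ) : Continuous (expKernelApprox s Δ n) := by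
  unfold expKernelApprox
  fun_prop

lemma expKernelApprox_nonneg (hs : 0 < s) {Δ : ℝ} (hΔ : 0 ≤ Δ) (n : ℕ) (τ : ℝ) :
    0 ≤ expKernelApprox s Δ n τ := by
  have := Gamma_pos_of_pos hs
  unfold expKernelApprox
  positivity

lemma expKernelApprox_le_rpow_neg (hs : 0 < s) (hs1 : s ≤ 1) (hτ : 0 < τ) {Δ : ℝ} (hΔ : 0 ≤ Δ)
    (n : ℕ) : expKernelApprox s Δ n τ ≤ τ ^ (-s) := by
  rw [expKernelApprox_eq, rpow_neg_eq_integral_div_Gamma hs hτ]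
  gcongr
  exact (antitoneOn_rpow_mul_exp_neg_mul hs1 hτ.le).rightRiemannSum_le_integral_Ioi
      rpow_mul_exp_neg_mul_nonneg (integrableOn_rpow_mul_exp_neg_mul hs hτ) hΔ n

lemma tendsto_expKernelApprox (hs : 0 < s) (hs1 : s ≤ 1) (hτ : 0 < τ) {Δ : ℕ → ℝ}
    (hΔpos : ∀ n, 0 < Δ n) (hΔ : Tendsto Δ atTop (nhds 0))
    (hnΔ : Tendsto (fun n : ℕ => (n + 1) * Δ n) atTop atTop) :
    Tendsto (fun n => expKernelApprox s (Δ n) n τ) atTop (nhds (τ ^ (-s))) := by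
  simp only [expKernelApprox_eq, rpow_neg_eq_integral_div_Gamma hs hτ]
  exact ((antitoneOn_rpow_mul_exp_neg_mul hs1 hτ.le).tendsto_rightRiemannSum
    rpow_mul_exp_neg_mul_nonneg (integrableOn_rpow_mul_exp_neg_mul hs hτ) hΔpos hΔ hnΔ).div_const _

end GammaKernel

lemma tendsto_rpow_half_integral_sq_sub_of_tendsto_of_le {α : Type*} [MeasurableSpace α] {μ : Measure α}
    {F : ℕ → α → ℝ} {G : α → ℝ} (hF : ∀ n, AEStronglyMeasurable (F n) μ)
    (hG : Integrable (fun x => G x ^ 2) μ) (hbound : ∀ n, ∀ᵐ x ∂μ, 0 ≤ F n x ∧ F n x ≤ G x)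
    (hlim : ∀ᵐ x ∂μ, Tendsto (fun n => F n x) atTop (nhds (G x))) :
    Tendsto (fun n => (∫ x, (F n x - G x) ^ 2 ∂μ) ^ (1 / 2 : ℝ)) atTop (nhds 0) := by
  have hGm : AEStronglyMeasurable G μ := aestronglyMeasurable_of_tendsto_ae atTop hF hlim
  have hint : Tendsto (fun n => ∫ x, (F n x - G x) ^ 2 ∂μ) atTop (nhds (∫ _, (0 : ℝ) ∂μ)) := by
    refine tendsto_integral_of_dominated_convergence _ (fun n => ((hF n).sub hGm).pow 2) hG
      (fun n => (hbound n).mono fun x hx => ?_) (hlim.mono fun x hx => ?_)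
    · rw [norm_of_nonneg (sq_nonneg _)]
      exact sq_le_sq' (by linarith) (by linarith)
    · simpa using (hx.sub_const (G x)).pow 2
  rw [integral_zero] at hint
  have hsqrt := (continuousAt_rpow_const 0 (1 / 2 : ℝ) (Or.inr one_half_pos.le)).tendsto.comp hint
  rwa [zero_rpow one_half_pos.ne'] at hsqrt

theorem exp_kernels_approx_power_kernel_general (H T : ℝ)
    (hH : H ∈ Set.Ioo (0:ℝ) (1/2)) :
    ∃ α x : ℕ → ℕ → ℝ,
      (∀ n i, 1 ≤ i → i ≤ n → 0 < α n i ∧ 0 < x n i) ∧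
      Tendsto
        (fun n : ℕ =>
          (∫ τ in Set.Ioc (0:ℝ) T,
            ((∑ i ∈ Finset.Icc 1 n, α n i * Real.exp (-(x n i) * τ))
              - τ ^ (H - 1/2)) ^ 2) ^ (1/2 : ℝ))
        atTop (nhds 0) := by
  obtain ⟨hH0, hH1⟩ := hH
  set s := 1 / 2 - H with hs_def
  have hs : 0 < s := by linarith
  have hΓ : 0 < Gamma s := Gamma_pos_of_pos hs
  set Δ : ℕ → ℝ := fun n => (√(n + 1))⁻¹
  have hΔpos (n : ℕ) : 0 < Δ n := by positivity
  have hsqrt : Tendsto (fun n : ℕ => √(n + 1)) atTop atTop :=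
    tendsto_sqrt_atTop.comp (tendsto_natCast_atTop_atTop.atTop_add tendsto_const_nhds)
  have hnΔ : (fun n : ℕ => (n + 1) * Δ n) = fun n : ℕ => √((n : ℝ) + 1) := by
    ext n; rw [← div_eq_mul_inv, div_sqrt]
  refine ⟨fun n i => (i * Δ n) ^ (s - 1) * Δ n / Gamma s, fun n i => i * Δ n,
    fun n i hi _ => ?_, ?_⟩
  · have : (0 : ℝ) < i := by exact_mod_cast hi
    exact ⟨by positivity, by positivity⟩
  rw [show H - 1 / 2 = -s by ring]
  refine tendsto_rpow_half_integral_sq_sub_of_tendsto_of_le (F := fun n => expKernelApprox s (Δ n) n)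
    (fun n => (continuous_expKernelApprox s (Δ n) n).aestronglyMeasurable) ?_ ?_ ?_
  · exact integrableOn_rpow_neg_sq_Ioc (by linarith) T
  · exact fun n => (ae_restrict_mem measurableSet_Ioc).mono fun τ hτ =>
      ⟨expKernelApprox_nonneg hs (hΔpos n).le n τ,
        expKernelApprox_le_rpow_neg hs (by linarith) hτ.1 (hΔpos n).le n⟩
  · refine (ae_restrict_mem measurableSet_Ioc).mono fun τ hτ =>
      tendsto_expKernelApprox hs (by linarith) hτ.1 hΔpos ?_ (hnΔ ▸ hsqrt)
    exact tendsto_inv_atTop_zero.comp hsqrt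

/-- There exist positive weights and positive mean-reversion speeds such that the
`n`-term exponential kernels converge to the power-law kernel `τ ↦ τ^{H-1/2}` in
`L²([0,T])`. -/
theorem exp_kernels_approx_power_kernel (H T : ℝ)
    (hH : H ∈ Set.Ioo (0:ℝ) (1/2)) (hT : 0 < T) :
    ∃ α x : ℕ → ℕ → ℝ,
      (∀ n i, 1 ≤ i → i ≤ n → 0 < α n i ∧ 0 < x n i) ∧
      Tendsto
        (fun n : ℕ =>
          (∫ τ in Set.Ioc (0:ℝ) T,
            ((∑ i ∈ Finset.Icc 1 n, α n i * Real.exp (-(x n i) * τ))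
              - τ ^ (H - 1/2)) ^ 2) ^ (1/2 : ℝ))
        atTop (nhds 0) :=
  exp_kernels_approx_power_kernel_general H T hH
end

section
/- Let ν be a nonzero finite measure on ℝ supported in an interval [a, b] with 0 ≤ a ≤ b, with mean x̄ = (∫ x dν(x)) / ν(ℝ), and let T > 0. Then the L²([0,T]) distance between t ↦ ν(ℝ)e^{-x̄ t} and t ↦ ∫ e^{-x t} dν(x) is at most (T^{5/2}/(2√5)) · ∫ (x − x̄)² dν(x). -/
/-!
By Taylor's formula with Lagrange remainder, `e^{-xt} = e^{-x̄t} - t e^{-x̄t} (x - x̄) + R` with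
`|R| ≤ t² (x - x̄)² / 2`, because the second derivative `e^{-ξ}` is at most `1` for `ξ ≥ 0`.
Integrating against `ν`, the linear term vanishes since `x̄` is the mean of `ν`, so the difference
is bounded pointwise by `t²/2 · ∫ (x - x̄)² dν`; the `L²([0,T])` norm of `t²/2` is `T^{5/2}/(2√5)`.
-/

open MeasureTheory Real Set

theorem abs_exp_sub_exp_sub_mul_le (x y : ℝ) :
    |exp x - exp y - exp y * (x - y)| ≤ exp (max x y) * (x - y) ^ 2 / 2 := by
  rcases eq_or_ne y x with rfl | hne
  · simp
  obtain ⟨ξ, hξ, htaylor⟩ := taylor_mean_remainder_lagrange_iteratedDeriv (n := 1) hne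
    contDiff_exp.contDiffOn
  have hderiv : iteratedDerivWithin 1 exp (uIcc y x) y = exp y := by
    rw [iteratedDerivWithin_one]
    exact (hasDerivAt_exp y).hasDerivWithinAt.derivWithin (uniqueDiffOn_uIcc hne y left_mem_uIcc)
  have htaylor_poly : taylorWithinEval exp 1 (uIcc y x) y x = exp y + exp y * (x - y) := by
    simp only [taylorWithinEval_succ, taylor_within_zero_eval, CharP.cast_eq_zero, zero_add,
      Nat.factorial_zero, Nat.cast_one, mul_one, inv_one, pow_one, one_mul, hderiv, smul_eq_mul,
      add_right_inj]
    ring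
  rw [htaylor_poly, iteratedDeriv_succ, iteratedDeriv_one, Real.deriv_exp, Real.deriv_exp]
    at htaylor
  simp only [Nat.reduceAdd, Nat.factorial_two, Nat.cast_ofNat] at htaylor
  rw [sub_sub, htaylor, abs_of_nonneg (by positivity), max_comm]
  gcongr
  exact hξ.2.le

theorem abs_exp_neg_mul_sub_exp_neg_mul_add_le {x m t : ℝ} (hx : 0 ≤ x) (hm : 0 ≤ m) (ht : 0 ≤ t) :
    |exp (-x * t) - exp (-m * t) + exp (-m * t) * t * (x - m)| ≤ t ^ 2 / 2 * (x - m) ^ 2 := by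
  have hmax : exp (max (-x * t) (-m * t)) ≤ 1 :=
    exp_le_one_iff.2 (max_le (by nlinarith) (by nlinarith))
  calc |exp (-x * t) - exp (-m * t) + exp (-m * t) * t * (x - m)|
      = |exp (-x * t) - exp (-m * t) - exp (-m * t) * (-x * t - -m * t)| := by ring_nf
    _ ≤ exp (max (-x * t) (-m * t)) * (-x * t - -m * t) ^ 2 / 2 := abs_exp_sub_exp_sub_mul_le _ _
    _ ≤ 1 * (-x * t - -m * t) ^ 2 / 2 := by gcongr
    _ = t ^ 2 / 2 * (x - m) ^ 2 := by ring

theorem abs_measureReal_mul_exp_neg_average_sub_integral_le {ν : Measure ℝ} [IsFiniteMeasure ν]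
    (hν : ∀ᵐ x ∂ν, 0 ≤ x) (hL2 : MemLp (fun x => x) 2 ν) {t : ℝ} (ht : 0 ≤ t) :
    |ν.real univ * exp (-(⨍ x, x ∂ν) * t) - ∫ x, exp (-x * t) ∂ν|
      ≤ t ^ 2 / 2 * ∫ x, (x - ⨍ y, y ∂ν) ^ 2 ∂ν := by
  set m := ⨍ x, x ∂ν with hm_def
  have hm : 0 ≤ m := by
    rw [hm_def, average_eq, smul_eq_mul]
    exact mul_nonneg (by positivity) (integral_nonneg_of_ae hν)
  have hexp : Integrable (fun x => exp (-x * t)) ν := by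
    refine Integrable.mono' (integrable_const 1) (by fun_prop) ?_
    filter_upwards [hν] with x hx
    rw [norm_of_nonneg (exp_pos _).le, exp_le_one_iff]
    nlinarith
  have hcentered : Integrable (fun x => x - m) ν :=
    (hL2.integrable one_le_two).sub (integrable_const m)
  have hremainder : ∫ x, (exp (-x * t) - exp (-m * t) + exp (-m * t) * t * (x - m)) ∂ν
      = (∫ x, exp (-x * t) ∂ν) - ν.real univ * exp (-m * t) := by
    rw [integral_add (f := fun x => exp (-x * t) - exp (-m * t))
        (hexp.sub (integrable_const _)) (hcentered.const_mul _),
      integral_sub hexp (integrable_const _), integral_const, integral_const_mul,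
      integral_sub_average, smul_eq_mul]
    ring
  rw [← abs_neg, neg_sub, ← hremainder, ← integral_const_mul]
  refine abs_integral_le_integral_abs.trans (integral_mono_ae ?_ ?_ ?_)
  · exact ((hexp.sub (integrable_const _)).add (hcentered.const_mul _)).abs
  · exact ((hL2.sub (memLp_const m)).integrable_sq).const_mul _
  · filter_upwards [hν] with x hx
    exact abs_exp_neg_mul_sub_exp_neg_mul_add_le hx hm ht

theorem setIntegral_Ioc_sq_le_of_abs_le_sq_half_mul {f : ℝ → ℝ} {T C : ℝ} (hT : 0 ≤ T)
    (hf : AEStronglyMeasurable f (volume.restrict (Ioc 0 T)))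
    (hbound : ∀ t ∈ Ioc 0 T, |f t| ≤ t ^ 2 / 2 * C) :
    ∫ t in Ioc 0 T, f t ^ 2 ≤ C ^ 2 * T ^ 5 / 20 := by
  have hsq_le : ∀ t ∈ Ioc 0 T, f t ^ 2 ≤ (t ^ 2 / 2 * C) ^ 2 := fun t ht =>
    sq_le_sq' (abs_le.1 (hbound t ht)).1 (abs_le.1 (hbound t ht)).2
  have hmajorant : IntegrableOn (fun t => (t ^ 2 / 2 * C) ^ 2) (Ioc 0 T) :=
    (by fun_prop : Continuous fun t : ℝ => (t ^ 2 / 2 * C) ^ 2).integrableOn_Ioc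
  have hint : IntegrableOn (fun t => f t ^ 2) (Ioc 0 T) := by
    refine hmajorant.mono' (hf.pow 2) ((ae_restrict_iff' measurableSet_Ioc).2 (ae_of_all _ ?_))
    intro t ht
    rw [norm_of_nonneg (sq_nonneg _)]
    exact hsq_le t ht
  calc ∫ t in Ioc 0 T, f t ^ 2 ≤ ∫ t in Ioc 0 T, (t ^ 2 / 2 * C) ^ 2 :=
        setIntegral_mono_on hint hmajorant measurableSet_Ioc hsq_le
    _ = C ^ 2 / 4 * ∫ t in (0)..T, t ^ 4 := by
        rw [← intervalIntegral.integral_of_le hT, ← intervalIntegral.integral_const_mul]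
        congr 1 with t
        ring
    _ = C ^ 2 * T ^ 5 / 20 := by
        rw [integral_pow]
        ring

theorem rpow_half_sq_mul_pow_five_div_twenty {T C : ℝ} (hT : 0 ≤ T) (hC : 0 ≤ C) :
    (C ^ 2 * T ^ 5 / 20) ^ (1 / 2 : ℝ) = T ^ ((5 : ℝ) / 2) / (2 * √5) * C := by
  have hsqrt20 : √20 = 2 * √5 := by
    rw [show (20 : ℝ) = 2 ^ 2 * 5 by norm_num, sqrt_mul (by positivity), sqrt_sq zero_le_two]
  have hsqrtT : √(T ^ 5) = T ^ ((5 : ℝ) / 2) := by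
    rw [sqrt_eq_rpow, ← rpow_natCast, ← rpow_mul hT]
    norm_num
  rw [← sqrt_eq_rpow, mul_div_assoc, sqrt_mul (sq_nonneg C), sqrt_sq hC, sqrt_div' _ (by norm_num),
    hsqrt20, hsqrtT]
  ring

theorem exp_mean_L2_bound_general (ν : Measure ℝ) [IsFiniteMeasure ν]
    (a b : ℝ) (ha : 0 ≤ a) (hsupp : ν (Set.Icc a b)ᶜ = 0)
    (xbar : ℝ) (hxbar : xbar = (∫ x, x ∂ν) / (ν Set.univ).toReal)
    (T : ℝ) (hT : 0 < T) :
    (∫ t in Set.Ioc (0:ℝ) T,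
        ((ν Set.univ).toReal * Real.exp (-xbar * t) - ∫ x, Real.exp (-x * t) ∂ν) ^ 2)
      ^ (1/2 : ℝ)
      ≤ T ^ ((5:ℝ)/2) / (2 * Real.sqrt 5) * ∫ x, (x - xbar) ^ 2 ∂ν := by
  have hIcc : ∀ᵐ x ∂ν, x ∈ Icc a b := ae_iff.2 hsupp
  have hnonneg : ∀ᵐ x ∂ν, 0 ≤ x := hIcc.mono fun x hx => ha.trans hx.1
  have hL2 : MemLp (fun x => x) 2 ν := by
    refine MemLp.of_bound aestronglyMeasurable_id b ?_
    filter_upwards [hIcc] with x hx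
    rw [norm_of_nonneg (ha.trans hx.1)]
    exact hx.2
  obtain rfl : xbar = ⨍ x, x ∂ν := by
    rw [hxbar, average_eq, smul_eq_mul, div_eq_inv_mul, measureReal_def]
  have hlaplace : StronglyMeasurable fun t : ℝ => ∫ x, exp (-x * t) ∂ν :=
    (by fun_prop : Continuous fun p : ℝ × ℝ => exp (-p.2 * p.1)).stronglyMeasurable
      |>.integral_prod_right'
  have hmeas : AEStronglyMeasurable
      (fun t => ν.real univ * exp (-(⨍ x, x ∂ν) * t) - ∫ x, exp (-x * t) ∂ν)
      (volume.restrict (Ioc 0 T)) :=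
    (Continuous.aestronglyMeasurable (by fun_prop)).sub hlaplace.aestronglyMeasurable
  calc _ ≤ ((∫ x, (x - ⨍ y, y ∂ν) ^ 2 ∂ν) ^ 2 * T ^ 5 / 20) ^ (1 / 2 : ℝ) :=
        rpow_le_rpow (setIntegral_nonneg measurableSet_Ioc fun _ _ => sq_nonneg _)
          (setIntegral_Ioc_sq_le_of_abs_le_sq_half_mul hT.le hmeas fun t ht =>
            abs_measureReal_mul_exp_neg_average_sub_integral_le hnonneg hL2 ht.1.le)
          (by norm_num)
    _ = _ := rpow_half_sq_mul_pow_five_div_twenty hT.le (integral_nonneg fun _ => sq_nonneg _)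

/-- `L²([0,T])` version of the second-order Taylor bound: for a nonzero finite measure `ν`
supported in `[a,b]` with `0 ≤ a`, and mean `x̄`, the `L²([0,T])` distance between
`t ↦ ν(ℝ)e^{-x̄t}` and `t ↦ ∫ e^{-xt} dν` is at most `(T^{5/2}/(2√5))·∫(x-x̄)² dν`. -/
theorem exp_mean_L2_bound (ν : Measure ℝ) [IsFiniteMeasure ν] (hν : ν ≠ 0)
    (a b : ℝ) (ha : 0 ≤ a) (hab : a ≤ b) (hsupp : ν (Set.Icc a b)ᶜ = 0)
    (xbar : ℝ) (hxbar : xbar = (∫ x, x ∂ν) / (ν Set.univ).toReal)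
    (T : ℝ) (hT : 0 < T) :
    (∫ t in Set.Ioc (0:ℝ) T,
        ((ν Set.univ).toReal * Real.exp (-xbar * t) - ∫ x, Real.exp (-x * t) ∂ν) ^ 2)
      ^ (1/2 : ℝ)
      ≤ T ^ ((5:ℝ)/2) / (2 * Real.sqrt 5) * ∫ x, (x - xbar) ^ 2 ∂ν :=
  exp_mean_L2_bound_general ν a b ha hsupp xbar hxbar T hT
end

section
/- Fix H ∈ (0, 1/2), ξ₀ > 0, η > 0, ρ ∈ [−1, 1], and for T > 0 define C^{Xξ}(T) = ρ·η·√(2H)·ξ₀^{3/2} · ∫₀^T ∫_s^T (u − s)^{H − 1/2} du ds, v(T) = ξ₀·T and σ̂ = √ξ₀. Then the first-order at-the-money skew coefficient satisfies σ̂ · C^{Xξ}(T) / (2·v(T)²) = (ρ·η·√(2H) / (2·(H + 1/2)·(H + 3/2))) · T^{H − 1/2} for all T > 0; in particular it is a constant multiple of T^{H − 1/2}. -/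
open MeasureTheory Real

theorem integral_Ioc_sub_rpow {a b r : ℝ} (hab : a ≤ b) (hr : -1 < r) :
    ∫ u in Set.Ioc a b, (u - a) ^ r = (b - a) ^ (r + 1) / (r + 1) := by
  rw [← intervalIntegral.integral_of_le hab, intervalIntegral.integral_comp_sub_right
    (fun x : ℝ => x ^ r), sub_self, integral_rpow (Or.inl hr),
    zero_rpow (by linarith), sub_zero]

theorem integral_Ioc_rpow_sub {a b r : ℝ} (hab : a ≤ b) (hr : -1 < r) :
    ∫ s in Set.Ioc a b, (b - s) ^ r = (b - a) ^ (r + 1) / (r + 1) := by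
  rw [← intervalIntegral.integral_of_le hab, intervalIntegral.integral_comp_sub_left
    (fun x : ℝ => x ^ r), sub_self, integral_rpow (Or.inl hr),
    zero_rpow (by linarith), sub_zero]

theorem integral_Ioc_integral_Ioc_sub_rpow {T r : ℝ} (hT : 0 ≤ T) (hr : -1 < r) :
    ∫ s in Set.Ioc 0 T, ∫ u in Set.Ioc s T, (u - s) ^ r
      = T ^ (r + 2) / ((r + 1) * (r + 2)) := by
  calc ∫ s in Set.Ioc 0 T, ∫ u in Set.Ioc s T, (u - s) ^ r
      = ∫ s in Set.Ioc 0 T, (T - s) ^ (r + 1) / (r + 1) :=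
        setIntegral_congr_fun measurableSet_Ioc
          fun s hs => integral_Ioc_sub_rpow hs.2 hr
    _ = (∫ s in Set.Ioc 0 T, (T - s) ^ (r + 1)) / (r + 1) := integral_div _ _
    _ = T ^ (r + 2) / ((r + 1) * (r + 2)) := by
        rw [integral_Ioc_rpow_sub hT (by linarith), sub_zero, add_assoc, one_add_one_eq_two,
          div_div, mul_comm]

theorem sqrt_mul_rpow_three_halves {x : ℝ} (hx : 0 ≤ x) : √x * x ^ ((3 : ℝ) / 2) = x ^ 2 := by
  rw [sqrt_eq_rpow, ← rpow_add' hx (by norm_num)]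
  norm_num

theorem rBergomi_skew_power_law_general (H ξ₀ η ρ : ℝ) (hH : H ∈ Set.Ioo (0:ℝ) (1/2))
    (hξ : 0 < ξ₀) (T : ℝ) (hT : 0 < T) :
    let CXxi : ℝ := ρ * η * Real.sqrt (2*H) * ξ₀ ^ ((3:ℝ)/2) *
      ∫ s in Set.Ioc (0:ℝ) T, ∫ u in Set.Ioc s T, (u - s) ^ (H - 1/2)
    let v : ℝ := ξ₀ * T
    Real.sqrt ξ₀ * CXxi / (2 * v ^ 2)
      = (ρ * η * Real.sqrt (2*H) / (2 * (H + 1/2) * (H + 3/2))) * T ^ (H - 1/2) := by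
  intro CXxi v
  have hH₀ : 0 < H := hH.1
  have hI : ∫ s in Set.Ioc (0:ℝ) T, ∫ u in Set.Ioc s T, (u - s) ^ (H - 1/2)
      = T ^ (H - 1/2) * T ^ 2 / ((H + 1/2) * (H + 3/2)) := by
    rw [integral_Ioc_integral_Ioc_sub_rpow hT.le (by linarith), ← rpow_natCast,
      ← rpow_add hT]
    ring_nf
  have hξ_pow := sqrt_mul_rpow_three_halves hξ.le
  simp only [CXxi, v, hI]
  field_simp
  linear_combination ρ * η * hξ_pow

/-- In the rough Bergomi model with flat initial forward variance curve, the first-order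
at-the-money skew coefficient is a constant multiple of `T^{H-1/2}`. -/
theorem rBergomi_skew_power_law (H ξ₀ η ρ : ℝ) (hH : H ∈ Set.Ioo (0:ℝ) (1/2))
    (hξ : 0 < ξ₀) (hη : 0 < η) (hρ : ρ ∈ Set.Icc (-1:ℝ) 1) (T : ℝ) (hT : 0 < T) :
    let CXxi : ℝ := ρ * η * Real.sqrt (2*H) * ξ₀ ^ ((3:ℝ)/2) *
      ∫ s in Set.Ioc (0:ℝ) T, ∫ u in Set.Ioc s T, (u - s) ^ (H - 1/2)
    let v : ℝ := ξ₀ * T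
    Real.sqrt ξ₀ * CXxi / (2 * v ^ 2)
      = (ρ * η * Real.sqrt (2*H) / (2 * (H + 1/2) * (H + 3/2))) * T ^ (H - 1/2) :=
  rBergomi_skew_power_law_general H ξ₀ η ρ hH hξ T hT
end
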